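/- arXiv:2310.01784 — 8 statements merged into one kernel-verified Lean document; each statement's English description precedes it below -/
import Mathlib

section
/- Suppose x* ∈ ℝⁿ satisfies weak second-order necessary conditions for min f(x) subject to x ≥ 0, i.e., x* ≥ 0, ∇f(x*) ≥ 0, x*_i [∇f(x*)]_i = 0 for all i, and wᵀ∇²f(x*)w ≥ 0 for all w with w_i = 0 whenever x*_i = 0. Define v* by v*_i = √(x*_i). Then v* satisfies second-order necessary conditions for min_v F(v) := f(v ⊙ v): ∇F(v*) = 0 and ∇²F(v*) is positive semidefinite. -/
/-!
By the chain rule, `F(v) = f(v ⊙ v)` has derivative `s ↦ ∇f(v ⊙ v) · (2 v ⊙ s)` and second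
derivative `s ↦ ∇f(v ⊙ v) · (2 s ⊙ s) + ∇²f(v ⊙ v)[2 v ⊙ s, 2 v ⊙ s]`. At `v* = √x*`,
complementarity `x*ᵢ ∇ᵢf(x*) = 0` forces `v*ᵢ ∇ᵢf(x*) = 0`, so the gradient vanishes. In the
Hessian the first term is nonnegative because `∇f(x*) ≥ 0`, and the second because `2 v* ⊙ s`
vanishes wherever `x*` does, which is exactly the cone on which `∇²f(x*)` is assumed nonnegative.
-/

noncomputable def grad {n : ℕ} (f : (Fin n → ℝ) → ℝ) (x : Fin n → ℝ) (i : Fin n) : ℝ :=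
  fderiv ℝ f x (Pi.single i 1)

noncomputable def hessQ {n : ℕ} (f : (Fin n → ℝ) → ℝ) (x w : Fin n → ℝ) : ℝ :=
  fderiv ℝ (fun y => fderiv ℝ f y w) x w

section SquareComposition

variable {A E : Type*} [NormedCommRing A] [NormedAlgebra ℝ A] [NormedAddCommGroup E]
  [NormedSpace ℝ E] {f : A → E}

theorem hasFDerivAt_mul_self (v : A) :
    HasFDerivAt (fun y : A => y * y) (2 • ContinuousLinearMap.mul ℝ A v) v :=
  ((hasFDerivAt_id v).fun_mul (hasFDerivAt_id v)).congr_fderiv (by ext; simp [two_smul])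

theorem HasFDerivAt.comp_mul_self {v : A} {f' : A →L[ℝ] E} (hf : HasFDerivAt f f' (v * v)) :
    HasFDerivAt (fun y => f (y * y)) (f'.comp (2 • ContinuousLinearMap.mul ℝ A v)) v :=
  HasFDerivAt.comp (f := fun y : A => y * y) v hf (hasFDerivAt_mul_self v)

theorem fderiv_comp_mul_self_apply {v : A} (hf : DifferentiableAt ℝ f (v * v)) (s : A) :
    fderiv ℝ (fun y => f (y * y)) v s = fderiv ℝ f (v * v) (2 • (v * s)) := by
  simp [hf.hasFDerivAt.comp_mul_self.fderiv]

theorem fderiv_fderiv_comp_mul_self_apply {v : A} (hf : Differentiable ℝ f)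
    (hf' : DifferentiableAt ℝ (fderiv ℝ f) (v * v)) (s : A) :
    fderiv ℝ (fun y => fderiv ℝ (fun y => f (y * y)) y s) v s =
      fderiv ℝ f (v * v) (2 • (s * s)) +
        fderiv ℝ (fderiv ℝ f) (v * v) (2 • (v * s)) (2 • (v * s)) := by
  have hlin : HasFDerivAt (fun y : A => 2 • (y * s)) (2 • ContinuousLinearMap.mul ℝ A s) v :=
    (2 • (ContinuousLinearMap.mul ℝ A).flip s).hasFDerivAt.congr_fderiv
      (by ext; simp [mul_comm])
  simp_rw [fderiv_comp_mul_self_apply (hf _)]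
  rw [(hf'.hasFDerivAt.comp_mul_self.clm_apply hlin).fderiv]
  simp [mul_comm s]

end SquareComposition

theorem fderiv_apply_eq_sum_grad {n : ℕ} (f : (Fin n → ℝ) → ℝ) (x w : Fin n → ℝ) :
    fderiv ℝ f x w = ∑ i, w i * grad f x i := by
  conv_lhs => rw [← Finset.univ_sum_single w, map_sum]
  refine Finset.sum_congr rfl fun i _ => ?_
  rw [grad, ← smul_eq_mul, ← map_smul, ← Pi.single_smul, smul_eq_mul, mul_one]

theorem hessQ_eq_fderiv_fderiv_apply {n : ℕ} {f : (Fin n → ℝ) → ℝ} {x : Fin n → ℝ}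
    (hf : DifferentiableAt ℝ (fderiv ℝ f) x) (w : Fin n → ℝ) :
    hessQ f x w = fderiv ℝ (fderiv ℝ f) x w w := by
  rw [hessQ, fderiv_clm_apply hf (differentiableAt_const w)]
  simp

theorem stmt2 {n : ℕ} (f : (Fin n → ℝ) → ℝ) (hf : ContDiff ℝ 2 f)
    (F : (Fin n → ℝ) → ℝ) (hF : ∀ v, F v = f (v * v))
    (xs : Fin n → ℝ)
    (hx : ∀ i, 0 ≤ xs i)
    (hg : ∀ i, 0 ≤ grad f xs i)
    (hcomp : ∀ i, xs i * grad f xs i = 0)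
    (h2 : ∀ w : Fin n → ℝ, (∀ i, xs i = 0 → w i = 0) → 0 ≤ hessQ f xs w)
    (vs : Fin n → ℝ) (hv : ∀ i, vs i = Real.sqrt (xs i)) :
    fderiv ℝ F vs = 0 ∧ ∀ s : Fin n → ℝ, 0 ≤ hessQ F vs s := by
  obtain rfl : F = fun v => f (v * v) := funext hF
  have hdiff : Differentiable ℝ f := hf.differentiable (by norm_num)
  have hdiff2 : Differentiable ℝ (fderiv ℝ f) :=
    (hf.fderiv_right le_rfl).differentiable one_ne_zero
  have hsq : vs * vs = xs := funext fun i => by simp [hv, Real.mul_self_sqrt (hx i)]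
  have hvs : ∀ i, xs i = 0 → vs i = 0 := fun i h => by rw [hv, h, Real.sqrt_zero]
  have hvg : ∀ i, vs i * grad f xs i = 0 := fun i => by
    rcases mul_eq_zero.mp (hcomp i) with h | h <;> simp [h, hvs]
  refine ⟨?_, fun s => ?_⟩
  · ext s
    rw [fderiv_comp_mul_self_apply (hdiff _), hsq, fderiv_apply_eq_sum_grad]
    refine (Finset.sum_eq_zero fun i _ => ?_).trans (zero_apply s).symm
    simp only [Pi.smul_apply, Pi.mul_apply, nsmul_eq_mul]
    linear_combination (2 * s i) * hvg i
  · rw [hessQ, fderiv_fderiv_comp_mul_self_apply hdiff (hdiff2 _), hsq,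
      ← hessQ_eq_fderiv_fderiv_apply (hdiff2 _), fderiv_apply_eq_sum_grad]
    refine add_nonneg (Finset.sum_nonneg fun i _ => ?_) (h2 _ fun i hi => by simp [hvs i hi])
    simpa [mul_assoc] using mul_nonneg zero_le_two (mul_nonneg (mul_self_nonneg (s i)) (hg i))
end

section
/- Let f : ℝ²ⁿ → ℝ, f(v₊, v₋) = h(v₊⊙v₊ − v₋⊙v₋) + λ(‖v₊‖² + ‖v₋‖²) with h convex and C¹ and λ > 0. If (v₊, v₋) satisfies ∇f(v₊,v₋) = 0 and the Hessian condition that for every index i with (v₊)_i = 0, the second directional derivative of f at (v₊,v₋) along e_i (the unit vector in the (v₊)_i coordinate) is nonnegative, and similarly for v₋, then x := v₊⊙v₊ − v₋⊙v₋ is a global minimizer of h(x) + λ‖x‖₁. -/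
open Set

/-!
Write `x = vp ⊙ vp - vm ⊙ vm` and `g = ∇h(x)`. Moving one coordinate of `vp` (resp. `vm`) moves `x`
along `±eᵢ` by the quadratic amount `2 a t + t²`, `a` being that coordinate. The first-order
conditions give `vpᵢ (gᵢ + λ) = 0` and `vmᵢ (λ - gᵢ) = 0`, and the second-order conditions at a
vanishing coordinate give `-λ ≤ gᵢ` resp. `gᵢ ≤ λ`. Hence `|gᵢ| ≤ λ` and `gᵢ xᵢ = -λ |xᵢ|`, i.e. `-g`
is a subgradient of `λ‖·‖₁` at `x`; together with the gradient inequality for the convex `h` this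
gives global optimality.
-/

theorem ConvexOn.add_fderiv_sub_le {E : Type*} [NormedAddCommGroup E] [NormedSpace ℝ E]
    {φ : E → ℝ} (hφ : ConvexOn ℝ univ φ) {x : E} (hd : DifferentiableAt ℝ φ x) (y : E) :
    φ x + fderiv ℝ φ x (y - x) ≤ φ y := by
  have hline : ConvexOn ℝ univ (φ ∘ (AffineMap.lineMap x y : ℝ →ᵃ[ℝ] E)) := hφ.comp_affineMap _
  have hderiv : HasDerivAt (φ ∘ (AffineMap.lineMap x y : ℝ →ᵃ[ℝ] E)) (fderiv ℝ φ x (y - x)) 0 := by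
    rw [← AffineMap.lineMap_apply_zero (k := ℝ) x y] at hd
    simpa using hd.hasFDerivAt.comp_hasDerivAt (0 : ℝ) AffineMap.hasDerivAt_lineMap
  have := hline.le_slope_of_hasDerivAt (mem_univ 0) (mem_univ 1) zero_lt_one hderiv
  simp only [slope_def_field, Function.comp_apply, AffineMap.lineMap_apply_zero,
    AffineMap.lineMap_apply_one, sub_zero, div_one] at this
  linarith

theorem hasDerivAt_sub_mul_of_continuousAt {u : ℝ → ℝ} {a : ℝ} (hu : ContinuousAt u a) :
    HasDerivAt (fun t => (t - a) * u t) (u a) a := by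
  rw [hasDerivAt_iff_tendsto_slope]
  refine (hu.tendsto.mono_left nhdsWithin_le_nhds).congr' ?_
  filter_upwards [self_mem_nhdsWithin] with t (ht : t ≠ a)
  rw [slope_def_field, sub_self, zero_mul, sub_zero, mul_div_cancel_left₀ _ (sub_ne_zero.2 ht)]

section Coordinates

variable {ι : Type*} [DecidableEq ι]

theorem add_smul_single_mul_self (a : ι → ℝ) (i : ι) (t : ℝ) :
    (a + t • Pi.single i (1 : ℝ)) * (a + t • Pi.single i 1)
      = a * a + (2 * a i * t + t ^ 2) • Pi.single i (1 : ℝ) := by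
  ext j
  rcases eq_or_ne j i with rfl | hj
  · simp only [Pi.mul_apply, Pi.add_apply, Pi.smul_apply, Pi.single_eq_same, smul_eq_mul, mul_one]
    ring
  · simp [hj]

theorem sum_sq_add_smul_single [Fintype ι] (a : ι → ℝ) (i : ι) (t : ℝ) :
    ∑ j, (a + t • Pi.single i 1 : ι → ℝ) j ^ 2 = ∑ j, a j ^ 2 + (2 * a i * t + t ^ 2) := by
  simp_rw [sq, ← Pi.mul_apply (a + _), add_smul_single_mul_self]
  simp [Finset.sum_add_distrib, Pi.single_apply, sq]

end Coordinates

section QuadraticPath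

variable {E : Type*} [NormedAddCommGroup E] [NormedSpace ℝ E] {H : E → ℝ} (x w : E) (a c S : ℝ)

theorem hasDerivAt_quadratic_path (hH : Differentiable ℝ H) (t : ℝ) :
    HasDerivAt (fun t => H (x + (2 * a * t + t ^ 2) • w) + c * (S + (2 * a * t + t ^ 2)))
      ((t + a) * (2 * (fderiv ℝ H (x + (2 * a * t + t ^ 2) • w) w + c))) t := by
  have hq : HasDerivAt (fun t : ℝ => 2 * a * t + t ^ 2) (2 * a + 2 * t) t := by
    refine (((hasDerivAt_id t).const_mul (2 * a)).add (hasDerivAt_pow 2 t)).congr_deriv ?_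
    norm_num
  have hH' := (hH _).hasFDerivAt.comp_hasDerivAt t ((hq.smul_const w).const_add x)
  refine (hH'.add ((hq.const_add S).const_mul c)).congr_deriv ?_
  simp only [map_smul, smul_eq_mul]
  ring

theorem neg_le_fderiv_of_quadratic_path (hH : ContDiff ℝ 1 H)
    (hstat : deriv (fun t => H (x + (2 * a * t + t ^ 2) • w) + c * (S + (2 * a * t + t ^ 2))) 0 = 0)
    (hsec : a = 0 →
      0 ≤ deriv (deriv fun t => H (x + (2 * a * t + t ^ 2) • w) + c * (S + (2 * a * t + t ^ 2))) 0) :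
    -c ≤ fderiv ℝ H x w ∧ (a = 0 ∨ fderiv ℝ H x w = -c) := by
  have hd := hH.differentiable one_ne_zero
  rcases eq_or_ne a 0 with rfl | ha
  · refine ⟨?_, Or.inl rfl⟩
    set u := fun t : ℝ => 2 * (fderiv ℝ H (x + (2 * 0 * t + t ^ 2) • w) w + c)
    have hu : ContinuousAt u 0 :=
      ((((hH.continuous_fderiv one_ne_zero).comp (by fun_prop)).clm_apply continuous_const).add
        continuous_const).const_mul 2 |>.continuousAt
    have hderiv : deriv (fun t => H (x + (2 * 0 * t + t ^ 2) • w) + c * (S + (2 * 0 * t + t ^ 2)))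
        = fun t => (t - 0) * u t :=
      funext fun t => by simpa [u] using (hasDerivAt_quadratic_path x w 0 c S hd t).deriv
    have hsec0 := hsec rfl
    rw [hderiv, (hasDerivAt_sub_mul_of_continuousAt hu).deriv] at hsec0
    simp only [u, mul_zero, zero_pow two_ne_zero, zero_smul, add_zero] at hsec0
    linarith
  · have hfirst := (hasDerivAt_quadratic_path x w a c S hd 0).deriv
    simp only [hstat, mul_zero, zero_add, zero_pow two_ne_zero, zero_smul, add_zero] at hfirst
    have hzero : fderiv ℝ H x w + c = 0 := by
      rcases mul_eq_zero.1 hfirst.symm with ha' | hc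
      · exact absurd ha' ha
      · linarith
    exact ⟨by linarith, Or.inr (by linarith)⟩

end QuadraticPath

theorem abs_le_and_mul_sub_eq_neg_mul_abs {g lam p m : ℝ} (hlam : 0 < lam)
    (hp : -lam ≤ g ∧ (p = 0 ∨ g = -lam)) (hm : -lam ≤ -g ∧ (m = 0 ∨ -g = -lam)) :
    |g| ≤ lam ∧ g * (p * p - m * m) = -(lam * |p * p - m * m|) := by
  refine ⟨abs_le.2 ⟨hp.1, by linarith [hm.1]⟩, ?_⟩
  rcases hp.2 with rfl | hg <;> rcases hm.2 with rfl | hg'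
  · simp
  · rw [abs_of_nonpos (by nlinarith), show g = lam by linarith]; ring
  · rw [abs_of_nonneg (by nlinarith), hg]; ring
  · linarith

theorem mul_sum_abs_le_apply_sub_add {ι : Type*} [Fintype ι] [DecidableEq ι]
    (g : (ι → ℝ) →L[ℝ] ℝ) {lam : ℝ} {x : ι → ℝ}
    (hg : ∀ i, |g (Pi.single i 1)| ≤ lam ∧ g (Pi.single i 1) * x i = -(lam * |x i|)) (y : ι → ℝ) :
    lam * ∑ i, |x i| ≤ g (y - x) + lam * ∑ i, |y i| := by
  have hexp : g (y - x) = ∑ i, (y i - x i) * g (Pi.single i 1) := by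
    conv_lhs => rw [pi_eq_sum_univ' (y - x)]
    simp [map_sum]
  rw [hexp, Finset.mul_sum, Finset.mul_sum, ← Finset.sum_add_distrib]
  refine Finset.sum_le_sum fun i _ => ?_
  obtain ⟨hle, hx⟩ := hg i
  have hy : -(lam * |y i|) ≤ y i * g (Pi.single i 1) := by
    have := neg_abs_le (y i * g (Pi.single i 1))
    rw [abs_mul] at this
    nlinarith [abs_nonneg (y i)]
  linarith

section HadamardObjective

variable {ι : Type*} [Fintype ι]

def hadamardObjective (h : (ι → ℝ) → ℝ) (lam : ℝ) (p : (ι → ℝ) × (ι → ℝ)) : ℝ :=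
  h (p.1 * p.1 - p.2 * p.2) + lam * ((∑ i, (p.1 i) ^ 2) + ∑ i, (p.2 i) ^ 2)

variable {h : (ι → ℝ) → ℝ} {lam : ℝ} (vp vm : ι → ℝ) (i : ι)

theorem differentiable_hadamardObjective (hh : Differentiable ℝ h) :
    Differentiable ℝ (hadamardObjective h lam) := by
  unfold hadamardObjective
  fun_prop

variable [DecidableEq ι]

theorem hadamardObjective_add_smul_single_fst (t : ℝ) :
    hadamardObjective h lam (vp + t • Pi.single i 1, vm)
      = h (vp * vp - vm * vm + (2 * vp i * t + t ^ 2) • Pi.single i 1)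
        + lam * (∑ j, vp j ^ 2 + ∑ j, vm j ^ 2 + (2 * vp i * t + t ^ 2)) := by
  rw [hadamardObjective, add_smul_single_mul_self, sum_sq_add_smul_single, add_sub_right_comm]
  ring

theorem hadamardObjective_add_smul_single_snd (t : ℝ) :
    hadamardObjective h lam (vp, vm + t • Pi.single i 1)
      = h (vp * vp - vm * vm + (2 * vm i * t + t ^ 2) • -Pi.single i 1)
        + lam * (∑ j, vp j ^ 2 + ∑ j, vm j ^ 2 + (2 * vm i * t + t ^ 2)) := by
  rw [hadamardObjective, add_smul_single_mul_self, sum_sq_add_smul_single, smul_neg, ← sub_eq_add_neg,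
    sub_add_eq_sub_sub]
  ring

variable {vp vm}

theorem neg_le_fderiv_single_of_hadamardObjective_fst (hC1 : ContDiff ℝ 1 h)
    (hstat : fderiv ℝ (hadamardObjective h lam) (vp, vm) = 0)
    (hsec : vp i = 0 →
      0 ≤ deriv (deriv fun t : ℝ => hadamardObjective h lam (vp + t • Pi.single i 1, vm)) 0) :
    -lam ≤ fderiv ℝ h (vp * vp - vm * vm) (Pi.single i 1)
      ∧ (vp i = 0 ∨ fderiv ℝ h (vp * vp - vm * vm) (Pi.single i 1) = -lam) := by
  have hpath := funext (hadamardObjective_add_smul_single_fst (h := h) (lam := lam) vp vm i)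
  refine neg_le_fderiv_of_quadratic_path _ _ _ _ _ hC1 ?_ (by rwa [hpath] at hsec)
  rw [← hpath]
  have := fderiv_comp_deriv (f := fun t : ℝ => (vp + t • Pi.single i 1, vm)) 0
    (differentiable_hadamardObjective (lam := lam) (hC1.differentiable one_ne_zero) _) (by fun_prop)
  rwa [zero_smul, add_zero, hstat] at this

theorem neg_le_fderiv_single_of_hadamardObjective_snd (hC1 : ContDiff ℝ 1 h)
    (hstat : fderiv ℝ (hadamardObjective h lam) (vp, vm) = 0)
    (hsec : vm i = 0 →
      0 ≤ deriv (deriv fun t : ℝ => hadamardObjective h lam (vp, vm + t • Pi.single i 1)) 0) :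
    -lam ≤ -fderiv ℝ h (vp * vp - vm * vm) (Pi.single i 1)
      ∧ (vm i = 0 ∨ -fderiv ℝ h (vp * vp - vm * vm) (Pi.single i 1) = -lam) := by
  have hpath := funext (hadamardObjective_add_smul_single_snd (h := h) (lam := lam) vp vm i)
  rw [← map_neg]
  refine neg_le_fderiv_of_quadratic_path _ _ _ _ _ hC1 ?_ (by rwa [hpath] at hsec)
  rw [← hpath]
  have := fderiv_comp_deriv (f := fun t : ℝ => (vp, vm + t • Pi.single i 1)) 0
    (differentiable_hadamardObjective (lam := lam) (hC1.differentiable one_ne_zero) _) (by fun_prop)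
  rwa [zero_smul, add_zero, hstat] at this

end HadamardObjective

theorem stmt7 {n : ℕ} (h : (Fin n → ℝ) → ℝ)
    (hconv : ConvexOn ℝ Set.univ h) (hC1 : ContDiff ℝ 1 h)
    (lam : ℝ) (hlam : 0 < lam)
    (f : ((Fin n → ℝ) × (Fin n → ℝ)) → ℝ)
    (hf : ∀ p : (Fin n → ℝ) × (Fin n → ℝ),
      f p = h (p.1 * p.1 - p.2 * p.2) + lam * ((∑ i, (p.1 i) ^ 2) + ∑ i, (p.2 i) ^ 2))
    (vp vm : Fin n → ℝ)
    (hstat : fderiv ℝ f (vp, vm) = 0)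
    (hsecp : ∀ i, vp i = 0 →
      0 ≤ deriv (deriv (fun t : ℝ => f (vp + t • (Pi.single i 1 : Fin n → ℝ), vm))) 0)
    (hsecm : ∀ i, vm i = 0 →
      0 ≤ deriv (deriv (fun t : ℝ => f (vp, vm + t • (Pi.single i 1 : Fin n → ℝ)))) 0) :
    ∀ y : Fin n → ℝ,
      h (vp * vp - vm * vm) + lam * ∑ i, |(vp * vp - vm * vm) i| ≤
        h y + lam * ∑ i, |y i| := by
  intro y
  obtain rfl : f = hadamardObjective h lam := funext hf
  have hcoord (i : Fin n) :
      |fderiv ℝ h (vp * vp - vm * vm) (Pi.single i 1)| ≤ lam ∧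
        fderiv ℝ h (vp * vp - vm * vm) (Pi.single i 1) * (vp * vp - vm * vm) i
          = -(lam * |(vp * vp - vm * vm) i|) :=
    abs_le_and_mul_sub_eq_neg_mul_abs hlam
      (neg_le_fderiv_single_of_hadamardObjective_fst i hC1 hstat (hsecp i))
      (neg_le_fderiv_single_of_hadamardObjective_snd i hC1 hstat (hsecm i))
  linarith [hconv.add_fderiv_sub_le (x := vp * vp - vm * vm) (hC1.differentiable one_ne_zero _) y,
    mul_sum_abs_le_apply_sub_add _ hcoord y]
end

section
/- Let f : ℝⁿ → ℝ and c : ℝⁿ → ℝᵐ be C². Suppose (x, v, s) satisfies the KKT conditions for min f(x) s.t. c(x) = v ⊙ v — namely ∇f(x) = ∑_i s_i ∇c_i(x), s ⊙ v = 0, c(x) = v ⊙ v — together with the second-order condition: for all (w, z) ∈ ℝⁿ × ℝᵐ with ∇c_i(x)ᵀw = 2 v_i z_i for all i, one has wᵀ∇²ₓₓL(x,s)w + 2∑_i s_i z_i² ≥ 0, where L(x,s) = f(x) − ∑_i s_i c_i(x). Then s_i ≥ 0 for every index i with v_i = 0; in particular s ≥ 0, c(x) ≥ 0, and s_i c_i(x)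 = 0 for all i, so (x, s) is a KKT point of min f(x) s.t. c(x) ≥ 0. -/
theorem stmt10 {n m : ℕ} (f : (Fin n → ℝ) → ℝ) (c : (Fin n → ℝ) → Fin m → ℝ)
    (hf : ContDiff ℝ 2 f) (hc : ContDiff ℝ 2 c)
    (x : Fin n → ℝ) (v s : Fin m → ℝ)
    (L : (Fin n → ℝ) → ℝ) (hL : ∀ y, L y = f y - ∑ i, s i * c y i)
    (hgrad : fderiv ℝ f x = ∑ i, s i • fderiv ℝ (fun y => c y i) x)
    (hsv : ∀ i, s i * v i = 0)
    (hcv : ∀ i, c x i = v i * v i)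
    (h2 : ∀ (w : Fin n → ℝ) (z : Fin m → ℝ),
      (∀ i, fderiv ℝ (fun y => c y i) x w = 2 * v i * z i) →
      0 ≤ fderiv ℝ (fun y => fderiv ℝ L y w) x w + 2 * ∑ i, s i * (z i) ^ 2) :
    (∀ i, v i = 0 → 0 ≤ s i) ∧ (∀ i, 0 ≤ s i) ∧ (∀ i, 0 ≤ c x i) ∧
      (∀ i, s i * c x i = 0) := by
  have key : ∀ i, v i = 0 → 0 ≤ s i := by
    intro i hvi
    have h := h2 0 (fun j => if j = i then 1 else 0) ?_
    · simp only [map_zero] at h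
      have hsum : ∑ j, s j * (if j = i then (1:ℝ) else 0) ^ 2 = s i := by
        rw [Finset.sum_eq_single i] <;> simp +contextual
      rw [hsum] at h
      linarith
    · intro j
      by_cases hji : j = i
      · subst hji; simp [hvi, map_zero]
      · simp [hji, map_zero]
  have hs : ∀ i, 0 ≤ s i := by
    intro i
    by_cases hvi : v i = 0
    · exact key i hvi
    · have := hsv i
      have : s i = 0 := by
        rcases mul_eq_zero.1 this with h | h
        · exact h
        · exact absurd h hvi
      simp [this]
  refine ⟨key, hs, fun i => by rw [hcv i]; exact mul_self_nonneg _, fun i => ?_⟩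
  rw [hcv i, ← mul_assoc, hsv i, zero_mul]
end

section
/- Under the assumptions of the previous setting (KKT plus second-order necessary conditions for the squared-slack problem min f(x) s.t. c(x) = v⊙v at (x,v,s)), the pair (x,s) satisfies the weak second-order necessary conditions for min f(x) s.t. c(x) ≥ 0: in addition to the KKT conditions, wᵀ∇²ₓₓL(x,s)w ≥ 0 for all w with ∇c_i(x)ᵀw = 0 for every index i with c_i(x) = 0. -/
/-! Given `w` tangent to the active constraints, lift it to a direction `(w, z)` of the
squared-slack problem with `z i = ∇cᵢ(x)ᵀw / (2 vᵢ)`. When `vᵢ = 0` the constraint is active, so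
`∇cᵢ(x)ᵀw = 0` and the junk value `z i = 0` is the right one; when `vᵢ ≠ 0` complementarity
forces `sᵢ = 0`. Either way `sᵢ zᵢ² = 0`, and the squared-slack second-order condition for
`(w, z)` is exactly the claim. -/

theorem exists_slack_lift {ι K : Type*} [Field K] [NeZero (2 : K)] (a v s : ι → K)
    (hsv : ∀ i, s i * v i = 0) (ha : ∀ i, v i = 0 → a i = 0) :
    ∃ z : ι → K, (∀ i, a i = 2 * v i * z i) ∧ ∀ i, s i * z i ^ 2 = 0 := by
  refine ⟨fun i => a i / (2 * v i), fun i => ?_, fun i => ?_⟩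
  · rw [mul_comm, div_mul_cancel_of_imp]
    intro h
    exact ha i ((mul_eq_zero.mp h).resolve_left two_ne_zero)
  · rcases mul_eq_zero.mp (hsv i) with hs | hv
    · simp [hs]
    · simp [hv]

theorem stmt11_general {n m : ℕ} (c : (Fin n → ℝ) → Fin m → ℝ)
    (x : Fin n → ℝ) (v s : Fin m → ℝ)
    (L : (Fin n → ℝ) → ℝ)
    (hsv : ∀ i, s i * v i = 0)
    (hcv : ∀ i, c x i = v i * v i)
    (h2 : ∀ (w : Fin n → ℝ) (z : Fin m → ℝ),
      (∀ i, fderiv ℝ (fun y => c y i) x w = 2 * v i * z i) →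
      0 ≤ fderiv ℝ (fun y => fderiv ℝ L y w) x w + 2 * ∑ i, s i * (z i) ^ 2) :
    ∀ w : Fin n → ℝ,
      (∀ i, c x i = 0 → fderiv ℝ (fun y => c y i) x w = 0) →
      0 ≤ fderiv ℝ (fun y => fderiv ℝ L y w) x w := by
  intro w hw
  obtain ⟨z, hz, hsz⟩ := exists_slack_lift (fun i => fderiv ℝ (fun y => c y i) x w) v s hsv
    fun i hv => hw i (by rw [hcv i, hv, zero_mul])
  simpa [hsz] using h2 w z hz

theorem stmt11 {n m : ℕ} (f : (Fin n → ℝ) → ℝ) (c : (Fin n → ℝ) → Fin m → ℝ)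
    (hf : ContDiff ℝ 2 f) (hc : ContDiff ℝ 2 c)
    (x : Fin n → ℝ) (v s : Fin m → ℝ)
    (L : (Fin n → ℝ) → ℝ) (hL : ∀ y, L y = f y - ∑ i, s i * c y i)
    (hgrad : fderiv ℝ f x = ∑ i, s i • fderiv ℝ (fun y => c y i) x)
    (hsv : ∀ i, s i * v i = 0)
    (hcv : ∀ i, c x i = v i * v i)
    (h2 : ∀ (w : Fin n → ℝ) (z : Fin m → ℝ),
      (∀ i, fderiv ℝ (fun y => c y i) x w = 2 * v i * z i) →
      0 ≤ fderiv ℝ (fun y => fderiv ℝ L y w) x w + 2 * ∑ i, s i * (z i) ^ 2) :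
    ∀ w : Fin n → ℝ,
      (∀ i, c x i = 0 → fderiv ℝ (fun y => c y i) x w = 0) →
      0 ≤ fderiv ℝ (fun y => fderiv ℝ L y w) x w :=
  stmt11_general c x v s L hsv hcv h2
end

section
/- Suppose (x, s) is a weak second-order necessary point for min f(x) s.t. c(x) ≥ 0: the KKT conditions ∇f(x) = ∑_i s_i∇c_i(x), s ≥ 0, c(x) ≥ 0, s_i c_i(x) = 0 hold, and wᵀ∇²ₓₓL(x,s)w ≥ 0 for all w with ∇c_i(x)ᵀw = 0 whenever c_i(x) = 0. Define v ∈ ℝᵐ by v_i = √(c_i(x)). Then (x, v, s) satisfies the KKT and second-order necessary conditions for min f(x) s.t. c(x) = v⊙v: s ⊙ v = 0, c(x) = v⊙v, and for all (w,z) with ∇c_i(x)ᵀw = 2v_i z_i for all i, wᵀ∇²ₓₓL(x,s)w + 2∑_i s_i z_i² ≥ 0. -/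
theorem stmt12 {n m : ℕ} (f : (Fin n → ℝ) → ℝ) (c : (Fin n → ℝ) → Fin m → ℝ)
    (hf : ContDiff ℝ 2 f) (hc : ContDiff ℝ 2 c)
    (x : Fin n → ℝ) (s : Fin m → ℝ)
    (L : (Fin n → ℝ) → ℝ) (hL : ∀ y, L y = f y - ∑ i, s i * c y i)
    (hgrad : fderiv ℝ f x = ∑ i, s i • fderiv ℝ (fun y => c y i) x)
    (hs : ∀ i, 0 ≤ s i)
    (hcx : ∀ i, 0 ≤ c x i)
    (hcomp : ∀ i, s i * c x i = 0)
    (h2 : ∀ w : Fin n → ℝ,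
      (∀ i, c x i = 0 → fderiv ℝ (fun y => c y i) x w = 0) →
      0 ≤ fderiv ℝ (fun y => fderiv ℝ L y w) x w)
    (v : Fin m → ℝ) (hv : ∀ i, v i = Real.sqrt (c x i)) :
    (∀ i, s i * v i = 0) ∧ (∀ i, c x i = v i * v i) ∧
      (∀ (w : Fin n → ℝ) (z : Fin m → ℝ),
        (∀ i, fderiv ℝ (fun y => c y i) x w = 2 * v i * z i) →
        0 ≤ fderiv ℝ (fun y => fderiv ℝ L y w) x w + 2 * ∑ i, s i * (z i) ^ 2) := by
  refine ⟨?_, ?_, ?_⟩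
  · intro i
    rcases eq_or_lt_of_le (hcx i) with h | h
    · rw [hv i, ← h, Real.sqrt_zero, mul_zero]
    · have : s i = 0 := by
        have := hcomp i
        nlinarith
      rw [this, zero_mul]
  · intro i
    rw [hv i, Real.mul_self_sqrt (hcx i)]
  · intro w z hwz
    have hH : 0 ≤ fderiv ℝ (fun y => fderiv ℝ L y w) x w := by
      apply h2
      intro i hci
      rw [hwz i, hv i, hci, Real.sqrt_zero, mul_zero, zero_mul]
    have hsum : 0 ≤ ∑ i, s i * (z i) ^ 2 :=
      Finset.sum_nonneg fun i _ => mul_nonneg (hs i) (sq_nonneg _)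
    linarith
end

section
/- Let A ∈ ℝ^{m×n}, b ∈ ℝᵐ, c ∈ ℝⁿ. Suppose (x̄, v̄, λ̄, s̄) satisfies Aᵀλ̄ + s̄ = c, Ax̄ = b, x̄ = v̄ ⊙ v̄, s̄ ⊙ v̄ = 0, and the second-order condition ∑_i s̄_i g_i² ≥ 0 for all (d, g) with Ad = 0 and d_i = 2 v̄_i g_i for all i. Then x̄ is an optimal solution of the linear program min cᵀx s.t. Ax = b, x ≥ 0, and (λ̄, s̄) is optimal for the dual max bᵀλ s.t. Aᵀλ + s = c, s ≥ 0. -/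
open Matrix

theorem stmt13 {m n : ℕ} (A : Matrix (Fin m) (Fin n) ℝ) (b : Fin m → ℝ) (c : Fin n → ℝ)
    (x v s : Fin n → ℝ) (lam : Fin m → ℝ)
    (hdual : Aᵀ.mulVec lam + s = c)
    (hprim : A.mulVec x = b)
    (hx : ∀ i, x i = v i * v i)
    (hsv : ∀ i, s i * v i = 0)
    (h2 : ∀ d g : Fin n → ℝ, A.mulVec d = 0 → (∀ i, d i = 2 * v i * g i) →
      0 ≤ ∑ i, s i * (g i) ^ 2) :
    ((A.mulVec x = b ∧ ∀ i, 0 ≤ x i) ∧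
      (∀ x' : Fin n → ℝ, A.mulVec x' = b → (∀ i, 0 ≤ x' i) → c ⬝ᵥ x ≤ c ⬝ᵥ x')) ∧
    ((Aᵀ.mulVec lam + s = c ∧ ∀ i, 0 ≤ s i) ∧
      (∀ (lam' : Fin m → ℝ) (s' : Fin n → ℝ), Aᵀ.mulVec lam' + s' = c →
        (∀ i, 0 ≤ s' i) → b ⬝ᵥ lam' ≤ b ⬝ᵥ lam)) := by
  have hs : ∀ i, 0 ≤ s i := by
    intro i
    rcases eq_or_ne (v i) 0 with hv | hv
    · have := h2 0 (fun j => if j = i then 1 else 0) (by simp)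
        (by
          intro j
          by_cases h : j = i
          · simp [h, hv]
          · simp [h])
      simpa using this
    · have : s i = 0 := by
        rcases mul_eq_zero.mp (hsv i) with h | h
        · exact h
        · exact absurd h hv
      simp [this]
  have hxnn : ∀ i, 0 ≤ x i := fun i => (hx i) ▸ mul_self_nonneg _
  have hsx : s ⬝ᵥ x = 0 := by
    simp only [dotProduct]
    apply Finset.sum_eq_zero
    intro i _
    rw [hx i, ← mul_assoc, hsv i, zero_mul]
  have hAl : ∀ y : Fin n → ℝ, Aᵀ.mulVec lam ⬝ᵥ y = lam ⬝ᵥ A.mulVec y := by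
    intro y
    rw [Matrix.mulVec_transpose, ← Matrix.dotProduct_mulVec]
  have hcx : c ⬝ᵥ x = b ⬝ᵥ lam := by
    rw [← hdual, add_dotProduct, hsx, add_zero, hAl, hprim, dotProduct_comm]
  refine ⟨⟨⟨hprim, hxnn⟩, ?_⟩, ⟨⟨hdual, hs⟩, ?_⟩⟩
  · intro x' hAx' hx'
    have : c ⬝ᵥ x' = b ⬝ᵥ lam + s ⬝ᵥ x' := by
      rw [← hdual, add_dotProduct, hAl, hAx', dotProduct_comm]
    rw [hcx, this]
    have : 0 ≤ s ⬝ᵥ x' := Finset.sum_nonneg fun i _ => mul_nonneg (hs i) (hx' i)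
    linarith
  · intro lam' s' hd' hs'
    have h1 : b ⬝ᵥ lam' = c ⬝ᵥ x - s' ⬝ᵥ x := by
      have : Aᵀ.mulVec lam' ⬝ᵥ x = lam' ⬝ᵥ A.mulVec x := by
        rw [Matrix.mulVec_transpose, ← Matrix.dotProduct_mulVec]
      have hc : Aᵀ.mulVec lam' ⬝ᵥ x + s' ⬝ᵥ x = c ⬝ᵥ x := by
        rw [← add_dotProduct, hd']
      rw [← hc, this, hprim, dotProduct_comm]
      ring
    have h0 : 0 ≤ s' ⬝ᵥ x := Finset.sum_nonneg fun i _ => mul_nonneg (hs' i) (hxnn i)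
    rw [h1, ← hcx]
    linarith
end

section
/- Let J ∈ ℝ^{m×n} and v ∈ ℝᵐ, and form the block matrix J_SSV = [J, −2 diag(v)] ∈ ℝ^{m×(n+m)}. Let A = {i : v_i = 0}. Then J_SSV has full row rank m if and only if the rows of J indexed by A are linearly independent. -/
/-!
A row combination `c` kills `[J, diag w]` exactly when it kills `J` and `c i * w i = 0` for
every `i`. Over a ring without zero divisors the second condition says that `c` is supported
on `{i | w i = 0}`, so the dependencies among the rows of `[J, diag w]` are precisely the
dependencies among the rows of `J` indexed by that set. For the theorem, `w = -2 • v`.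
-/

open Matrix

theorem Fintype.linearIndepOn_iff {ι R M : Type*} [Fintype ι] [Ring R] [AddCommGroup M]
    [Module R M] {v : ι → M} {s : Set ι} :
    LinearIndepOn R v s ↔
      ∀ c : ι → R, (∀ i ∉ s, c i = 0) → ∑ i, c i • v i = 0 → ∀ i, c i = 0 := by
  have hsum (l : ι →₀ R) : Finsupp.linearCombination R v l = ∑ i, l i • v i := by
    simp [Finsupp.linearCombination_apply, Finsupp.sum_fintype]
  simp only [_root_.linearIndepOn_iff, Finsupp.mem_supported', hsum]
  refine ⟨fun h c hc hc0 i => ?_, fun h l hl hl0 => Finsupp.ext (h l hl hl0)⟩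
  simpa using DFunLike.congr_fun (h (Finsupp.equivFunOnFinite.symm c) (by simpa using hc)
    (by simpa using hc0)) i

namespace Matrix

variable {m n R : Type*} [Fintype m] [DecidableEq m]

theorem vecMul_fromCols_diagonal_eq_zero_iff [Semiring R] (J : Matrix m n R) (w c : m → R) :
    c ᵥ* fromCols J (diagonal w) = 0 ↔ c ᵥ* J = 0 ∧ ∀ i, c i * w i = 0 := by
  rw [vecMul_fromCols, ← Sum.elim_zero_zero, Sum.elim_eq_iff, funext_iff (f := c ᵥ* diagonal w)]
  simp only [vecMul_diagonal, Pi.zero_apply]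

theorem linearIndependent_rows_fromCols_diagonal_iff [Ring R] [NoZeroDivisors R]
    (J : Matrix m n R) (w : m → R) :
    LinearIndependent R (fun i => fromCols J (diagonal w) i) ↔
      LinearIndepOn R (fun i => J i) {i | w i = 0} := by
  simp only [Fintype.linearIndependent_iff, Fintype.linearIndepOn_iff, ← vecMul_eq_sum,
    vecMul_fromCols_diagonal_eq_zero_iff]
  constructor
  · intro h c hc hcJ
    refine h c ⟨hcJ, fun i => ?_⟩
    by_cases hw : w i = 0
    · rw [hw, mul_zero]
    · rw [hc i hw, zero_mul]
  · intro h c ⟨hcJ, hcw⟩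
    exact h c (fun i hw => (mul_eq_zero.mp (hcw i)).resolve_right hw) hcJ

end Matrix

theorem stmt16 {m n : ℕ} (J : Matrix (Fin m) (Fin n) ℝ) (v : Fin m → ℝ) :
    LinearIndependent ℝ
      (fun i : Fin m => (Matrix.fromCols J ((-2 : ℝ) • Matrix.diagonal v)) i) ↔
    LinearIndependent ℝ (fun i : {i : Fin m // v i = 0} => J i.1) := by
  have hzero : {i | ((-2 : ℝ) • v) i = 0} = {i | v i = 0} := by
    ext i
    simp
  rw [← diagonal_smul, linearIndependent_rows_fromCols_diagonal_iff, hzero]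
  rfl
end

section
/- Let (x, v, s) satisfy ‖2 s ⊙ v‖ ≤ ε₁ and ‖c(x) − v⊙v‖ ≤ ε₂, and let ζ ≥ 2ε₂. Then for every index i with c_i(x) > ζ, one has |s_i| ≤ ε₁/(2√(ζ − ε₂)) ≤ ε₁/√(2ζ). -/
theorem stmt18 {n m : ℕ} (c : (Fin n → ℝ) → Fin m → ℝ)
    (x : Fin n → ℝ) (v s : Fin m → ℝ) (ε₁ ε₂ ζ : ℝ)
    (hε₁ : 0 < ε₁) (hε₂ : 0 < ε₂) (hζ : 2 * ε₂ ≤ ζ)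
    (h1 : Real.sqrt (∑ i, (2 * s i * v i) ^ 2) ≤ ε₁)
    (h2 : Real.sqrt (∑ i, (c x i - v i * v i) ^ 2) ≤ ε₂) :
    ∀ i, ζ < c x i →
      |s i| ≤ ε₁ / (2 * Real.sqrt (ζ - ε₂)) ∧
      ε₁ / (2 * Real.sqrt (ζ - ε₂)) ≤ ε₁ / Real.sqrt (2 * ζ) := by
  intro i hi
  have hζε : 0 < ζ - ε₂ := by linarith
  have hsum1 : ∑ j, (2 * s j * v j) ^ 2 ≤ ε₁ ^ 2 := by
    nlinarith [Real.sq_sqrt (Finset.sum_nonneg fun j (_ : j ∈ Finset.univ) =>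
      sq_nonneg (2 * s j * v j)),
      Real.sqrt_nonneg (∑ j, (2 * s j * v j) ^ 2)]
  have hsum2 : ∑ j, (c x j - v j * v j) ^ 2 ≤ ε₂ ^ 2 := by
    nlinarith [Real.sq_sqrt (Finset.sum_nonneg fun j (_ : j ∈ Finset.univ) =>
      sq_nonneg (c x j - v j * v j)),
      Real.sqrt_nonneg (∑ j, (c x j - v j * v j) ^ 2)]
  have hterm1 : (2 * s i * v i) ^ 2 ≤ ε₁ ^ 2 :=
    le_trans (Finset.single_le_sum (f := fun j => (2 * s j * v j) ^ 2)
      (fun j _ => sq_nonneg _) (Finset.mem_univ i)) hsum1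
  have hterm2 : (c x i - v i * v i) ^ 2 ≤ ε₂ ^ 2 :=
    le_trans (Finset.single_le_sum (f := fun j => (c x j - v j * v j) ^ 2)
      (fun j _ => sq_nonneg _) (Finset.mem_univ i)) hsum2
  -- v i ^ 2 ≥ ζ - ε₂
  have hv2 : ζ - ε₂ ≤ v i ^ 2 := by nlinarith
  have hvabs : Real.sqrt (ζ - ε₂) ≤ |v i| := by
    rw [← Real.sqrt_sq_eq_abs]
    exact Real.sqrt_le_sqrt hv2
  have hsv : |2 * s i * v i| ≤ ε₁ := by
    have := abs_nonneg (2 * s i * v i)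
    nlinarith [sq_abs (2 * s i * v i)]
  have hsqrtpos : 0 < Real.sqrt (ζ - ε₂) := Real.sqrt_pos.mpr hζε
  constructor
  · rw [le_div_iff₀ (by positivity)]
    have : |s i| * (2 * Real.sqrt (ζ - ε₂)) ≤ 2 * |s i| * |v i| := by
      nlinarith [abs_nonneg (s i)]
    refine this.trans ?_
    calc 2 * |s i| * |v i| = |2 * s i * v i| := by
          rw [abs_mul, abs_mul]; simp [abs_of_nonneg, mul_assoc]
      _ ≤ ε₁ := hsv
  · apply div_le_div_of_nonneg_left hε₁.le (Real.sqrt_pos.mpr (by linarith))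
    rw [show (2 : ℝ) * Real.sqrt (ζ - ε₂) = Real.sqrt (4 * (ζ - ε₂)) by
      rw [show (4 : ℝ) * (ζ - ε₂) = 2 ^ 2 * (ζ - ε₂) by ring,
        Real.sqrt_mul (by positivity), Real.sqrt_sq (by norm_num)]]
    exact Real.sqrt_le_sqrt (by linarith)
end
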